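/- Let X be a 2-Segal semi-simplicial set such that X_0 and X_1 are singletons. Then the two maps (∂_2, ∂_0) : X_3 → X_2 × X_2 and (∂_3, ∂_1) : X_3 → X_2 × X_2 are bijections, and the composite bijection α := (∂_2, ∂_0) ∘ (∂_3, ∂_1)^{-1} : X_2 × X_2 → X_2 × X_2 is a set-theoretic solution of the pentagon equation: α_{23} ∘ α_{13} ∘ α_{12} = α_{12} ∘ α_{23} as self-maps of X_2 × X_2 × X_2, where α_{12}(x,y,z) = (α(x,y), z), α_{23}(x,y,z) = (x, α(y,z)), and α_{13}(x,y,z) has first and third coordinates the two components of α applied to (x,z) and second coordinate y. -/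
import Mathlib


universe u v

namespace SemiSeg

/-- A semi-simplicial set: a presheaf on the category of finite nonempty ordinals and
strictly monotone (injective order-preserving) maps. -/
structure SemiSSet : Type (u + 1) where
  obj : ℕ → Type u
  map : ∀ {m n : ℕ} (f : Fin (m + 1) → Fin (n + 1)), StrictMono f → obj n → obj m
  map_id : ∀ (n : ℕ) (x : obj n), map id strictMono_id x = x
  map_comp : ∀ {l m n : ℕ} (f : Fin (l + 1) → Fin (m + 1)) (hf : StrictMono f)
    (g : Fin (m + 1) → Fin (n + 1)) (hg : StrictMono g) (x : obj n),
    map (g ∘ f) (hg.comp hf) x = map f hf (map g hg x)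

/-- The strictly monotone injection `[l] → [n]`, `k ↦ i + k` (the interval
`{i, …, i + l}`). -/
def intervalF {n : ℕ} (i l : ℕ) (h : i + l ≤ n) : Fin (l + 1) → Fin (n + 1) :=
  fun k => ⟨i + k.1, by have := k.isLt; omega⟩

theorem intervalF_mono {n : ℕ} (i l : ℕ) (h : i + l ≤ n) : StrictMono (intervalF i l h) := by
  intro a b hab
  have h' : a.1 < b.1 := hab
  simp only [intervalF, Fin.mk_lt_mk]
  omega

/-- The strictly monotone injection with image `{0,…,i} ∪ {j,…,n}`. -/
def outerF {n : ℕ} (i j : ℕ) (hij : i < j) (hj : j ≤ n) :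
    Fin (n - (j - i) + 2) → Fin (n + 1) :=
  fun k => ⟨if k.1 ≤ i then k.1 else k.1 + (j - i) - 1, by have := k.isLt; split <;> omega⟩

theorem outerF_mono {n : ℕ} (i j : ℕ) (hij : i < j) (hj : j ≤ n) :
    StrictMono (outerF i j hij hj) := by
  intro a b hab
  have h' : a.1 < b.1 := hab
  have ha := a.isLt
  have hb := b.isLt
  simp only [outerF, Fin.mk_lt_mk]
  split_ifs <;> omega

/-- The strictly monotone injection `[1] → [l]` (for `l ≥ 1`) sending `0 ↦ 0`, `1 ↦ l`. -/
def endsF (l : ℕ) (hl : 0 < l) : Fin 2 → Fin (l + 1) :=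
  fun k => ⟨k.1 * l, by
    have hk : k.1 ≤ 1 := Nat.lt_succ_iff.mp k.isLt
    have h2 : k.1 * l ≤ 1 * l := Nat.mul_le_mul hk (le_refl l)
    omega⟩

theorem endsF_mono (l : ℕ) (hl : 0 < l) : StrictMono (endsF l hl) := by
  intro a b hab
  have h' : a.1 < b.1 := hab
  have hb : b.1 ≤ 1 := Nat.lt_succ_iff.mp b.isLt
  have ha0 : a.1 = 0 := by omega
  have hb1 : b.1 = 1 := by omega
  simp only [endsF, Fin.mk_lt_mk, ha0, hb1]
  simpa using hl

/-- 2-Segal condition for a semi-simplicial set at a pair `0 ≤ i < j ≤ n`. -/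
def TwoSegalMapBij (X : SemiSSet.{u}) (n i j : ℕ) (hij : i < j) (hj : j ≤ n) : Prop :=
  ∀ (a : X.obj (n - (j - i) + 1)) (b : X.obj (j - i)),
    X.map (intervalF i 1 (by omega)) (intervalF_mono i 1 (by omega)) a =
      X.map (endsF (j - i) (by omega)) (endsF_mono (j - i) (by omega)) b →
    ∃! x : X.obj n,
      X.map (outerF i j hij hj) (outerF_mono i j hij hj) x = a ∧
      X.map (intervalF i (j - i) (by omega)) (intervalF_mono i (j - i) (by omega)) x = b

/-- A semi-simplicial set is 2-Segal if all 2-Segal maps are bijections. -/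
def IsTwoSegal (X : SemiSSet.{u}) : Prop :=
  ∀ (n i j : ℕ), 3 ≤ n → ∀ (hij : i < j) (hj : j ≤ n), TwoSegalMapBij X n i j hij hj

end SemiSeg

namespace SemiSeg

/-- The `i`-th face injection `[n] → [n+1]` (omitting `i`). -/
def faceF {n : ℕ} (i : ℕ) (h : i ≤ n + 1) : Fin (n + 1) → Fin (n + 2) :=
  fun k => if k.1 < i then ⟨k.1, by have := k.isLt; omega⟩
    else ⟨k.1 + 1, by have := k.isLt; omega⟩

theorem faceF_mono {n : ℕ} (i : ℕ) (h : i ≤ n + 1) : StrictMono (faceF i h) := by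
  intro a b hab
  have h' : a.1 < b.1 := hab
  simp only [faceF]
  split_ifs <;> simp only [Fin.mk_lt_mk] <;> omega

/-- The `i`-th face map `∂ᵢ : X_{n+1} → X_n`. -/
def d (X : SemiSSet.{u}) {n : ℕ} (i : ℕ) (h : i ≤ n + 1) : X.obj (n + 1) → X.obj n :=
  X.map (faceF i h) (faceF_mono i h)

/-- `α` applied to the first two coordinates. -/
def a12 {C : Type u} (α : C × C → C × C) : C × C × C → C × C × C :=
  fun p => ((α (p.1, p.2.1)).1, (α (p.1, p.2.1)).2, p.2.2)

/-- `α` applied to the last two coordinates. -/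
def a23 {C : Type u} (α : C × C → C × C) : C × C × C → C × C × C :=
  fun p => (p.1, α (p.2.1, p.2.2))

/-- `α` applied to the first and third coordinates. -/
def a13 {C : Type u} (α : C × C → C × C) : C × C × C → C × C × C :=
  fun p => ((α (p.1, p.2.2)).1, p.2.1, (α (p.1, p.2.2)).2)

theorem map_congr (X : SemiSSet.{u}) {m n : ℕ} {f g : Fin (m + 1) → Fin (n + 1)}
    (h : f = g) (hf : StrictMono f) (hg : StrictMono g) (x : X.obj n) :
    X.map f hf x = X.map g hg x := by subst h; rfl

/-- For a 2-Segal semi-simplicial set with `X₀` and `X₁` singletons, the maps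
`(∂₂,∂₀), (∂₃,∂₁) : X₃ → X₂ × X₂` are bijections and the composite
`α = (∂₂,∂₀) ∘ (∂₃,∂₁)⁻¹` solves the pentagon equation. -/
theorem pentagon_from_twoSegal (X : SemiSSet.{u}) (hX : IsTwoSegal X)
    (h0sub : ∀ a b : X.obj 0, a = b) (h0ne : Nonempty (X.obj 0))
    (h1sub : ∀ a b : X.obj 1, a = b) (h1ne : Nonempty (X.obj 1)) :
    Function.Bijective
      (fun x : X.obj 3 => (d X (n := 2) 2 (by omega) x, d X (n := 2) 0 (by omega) x)) ∧
    Function.Bijective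
      (fun x : X.obj 3 => (d X (n := 2) 3 (by omega) x, d X (n := 2) 1 (by omega) x)) ∧
    (∀ α : X.obj 2 × X.obj 2 → X.obj 2 × X.obj 2,
      (∀ x : X.obj 3,
        α (d X (n := 2) 3 (by omega) x, d X (n := 2) 1 (by omega) x) =
          (d X (n := 2) 2 (by omega) x, d X (n := 2) 0 (by omega) x)) →
      a23 α ∘ a13 α ∘ a12 α = a12 α ∘ a23 α) := by
  -- the 2-Segal condition at (3,1,3) : unique filling of (∂₂, ∂₀)
  have key13 : ∀ a b : X.obj 2, ∃! x : X.obj 3,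
      d X (n := 2) 2 (by omega) x = a ∧ d X (n := 2) 0 (by omega) x = b := by
    intro a b
    have e2 : ∀ y : X.obj 3, d X (n := 2) 2 (by omega) y
        = X.map (outerF 1 3 (by omega) (by omega)) (outerF_mono 1 3 (by omega) (by omega)) y :=
      fun y => map_congr X (by funext k; fin_cases k <;> rfl) _ _ y
    have e0 : ∀ y : X.obj 3, d X (n := 2) 0 (by omega) y
        = X.map (intervalF 1 2 (by omega)) (intervalF_mono 1 2 (by omega)) y :=
      fun y => map_congr X (by funext k; fin_cases k <;> rfl) _ _ y
    obtain ⟨x, ⟨hx1, hx2⟩, hu⟩ := hX 3 1 3 (by omega) (by omega) (by omega) a b (h1sub _ _)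
    refine ⟨x, ⟨by rw [e2]; exact hx1, by rw [e0]; exact hx2⟩, ?_⟩
    intro y hy
    exact hu y ⟨by rw [← e2]; exact hy.1, by rw [← e0]; exact hy.2⟩
  -- the 2-Segal condition at (3,0,2) : unique filling of (∂₁, ∂₃)
  have key02 : ∀ a b : X.obj 2, ∃! x : X.obj 3,
      d X (n := 2) 1 (by omega) x = a ∧ d X (n := 2) 3 (by omega) x = b := by
    intro a b
    have e1 : ∀ y : X.obj 3, d X (n := 2) 1 (by omega) y
        = X.map (outerF 0 2 (by omega) (by omega)) (outerF_mono 0 2 (by omega) (by omega)) y :=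
      fun y => map_congr X (by funext k; fin_cases k <;> rfl) _ _ y
    have e3 : ∀ y : X.obj 3, d X (n := 2) 3 (by omega) y
        = X.map (intervalF 0 2 (by omega)) (intervalF_mono 0 2 (by omega)) y :=
      fun y => map_congr X (by funext k; fin_cases k <;> rfl) _ _ y
    obtain ⟨x, ⟨hx1, hx2⟩, hu⟩ := hX 3 0 2 (by omega) (by omega) (by omega) a b (h1sub _ _)
    refine ⟨x, ⟨by rw [e1]; exact hx1, by rw [e3]; exact hx2⟩, ?_⟩
    intro y hy
    exact hu y ⟨by rw [← e1]; exact hy.1, by rw [← e3]; exact hy.2⟩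
  have bij1 : Function.Bijective
      (fun x : X.obj 3 => (d X (n := 2) 2 (by omega) x, d X (n := 2) 0 (by omega) x)) := by
    constructor
    · intro u v h
      simp only [Prod.mk.injEq] at h
      obtain ⟨x, -, hu⟩ := key13 (d X (n := 2) 2 (by omega) v) (d X (n := 2) 0 (by omega) v)
      rw [hu u ⟨h.1, h.2⟩, hu v ⟨rfl, rfl⟩]
    · intro ⟨a, b⟩
      obtain ⟨x, hx, -⟩ := key13 a b
      exact ⟨x, by simp only [hx.1, hx.2]⟩
  have bij2 : Function.Bijective
      (fun x : X.obj 3 => (d X (n := 2) 3 (by omega) x, d X (n := 2) 1 (by omega) x)) := by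
    constructor
    · intro u v h
      simp only [Prod.mk.injEq] at h
      obtain ⟨x, -, hu⟩ := key02 (d X (n := 2) 1 (by omega) v) (d X (n := 2) 3 (by omega) v)
      rw [hu u ⟨h.2, h.1⟩, hu v ⟨rfl, rfl⟩]
    · intro ⟨a, b⟩
      obtain ⟨x, hx, -⟩ := key02 b a
      exact ⟨x, by simp only [hx.1, hx.2]⟩
  refine ⟨bij1, bij2, ?_⟩
  intro α hα
  funext p
  obtain ⟨x, y, z⟩ := p
  -- build a tetrahedron T with ∂₃ T = x, ∂₁ T = y
  obtain ⟨T, ⟨hT1, hT3⟩, -⟩ := key02 y x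
  -- build a 4-simplex w with w₍₀₃₄₎ = z and w₍₀₁₂₃₎ = T
  obtain ⟨w, ⟨hw1, hw2⟩, -⟩ := hX 4 0 3 (by omega) (by omega) (by omega) z T (h1sub _ _)
  -- strict monotonicity of the ten triangle inclusions
  have m012 : StrictMono (![0, 1, 2] : Fin 3 → Fin 5) := by decide
  have m013 : StrictMono (![0, 1, 3] : Fin 3 → Fin 5) := by decide
  have m014 : StrictMono (![0, 1, 4] : Fin 3 → Fin 5) := by decide
  have m023 : StrictMono (![0, 2, 3] : Fin 3 → Fin 5) := by decide
  have m024 : StrictMono (![0, 2, 4] : Fin 3 → Fin 5) := by decide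
  have m034 : StrictMono (![0, 3, 4] : Fin 3 → Fin 5) := by decide
  have m123 : StrictMono (![1, 2, 3] : Fin 3 → Fin 5) := by decide
  have m124 : StrictMono (![1, 2, 4] : Fin 3 → Fin 5) := by decide
  have m134 : StrictMono (![1, 3, 4] : Fin 3 → Fin 5) := by decide
  have m234 : StrictMono (![2, 3, 4] : Fin 3 → Fin 5) := by decide
  -- faces of restrictions of w
  have comp1 : ∀ (g : Fin 4 → Fin 5) (hg : StrictMono g) (j : ℕ) (hj : j ≤ 3)
      (f : Fin 3 → Fin 5) (hf : StrictMono f), g ∘ faceF j hj = f →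
      d X (n := 2) j hj (X.map g hg w) = X.map f hf w := by
    intro g hg j hj f hf hcomp
    unfold d
    rw [← X.map_comp]
    exact map_congr X hcomp _ _ w
  -- the three given triangles of w
  have ht012 : X.map (![0, 1, 2] : Fin 3 → Fin 5) m012 w = x := by
    rw [← hT3, ← hw2]
    exact (comp1 _ _ 3 (by omega) _ m012 (by funext k; fin_cases k <;> rfl)).symm
  have ht023 : X.map (![0, 2, 3] : Fin 3 → Fin 5) m023 w = y := by
    rw [← hT1, ← hw2]
    exact (comp1 _ _ 1 (by omega) _ m023 (by funext k; fin_cases k <;> rfl)).symm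
  have ht034 : X.map (![0, 3, 4] : Fin 3 → Fin 5) m034 w = z := by
    rw [← hw1]
    exact map_congr X (by funext k; fin_cases k <;> rfl) _ _ w
  -- faces of faces of w
  have dd : ∀ (i : ℕ) (hi : i ≤ 4) (j : ℕ) (hj : j ≤ 3)
      (f : Fin 3 → Fin 5) (hf : StrictMono f), faceF i hi ∘ faceF j hj = f →
      d X (n := 2) j hj (d X (n := 3) i hi w) = X.map f hf w :=
    fun i hi j hj f hf hc => comp1 (faceF i hi) (faceF_mono i hi) j hj f hf hc
  -- the five tetrahedral faces give five instances of α
  have hA : α (x, y) = (X.map (![0, 1, 3] : Fin 3 → Fin 5) m013 w,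
      X.map (![1, 2, 3] : Fin 3 → Fin 5) m123 w) := by
    have h := hα (d X (n := 3) 4 (by omega) w)
    rw [dd 4 (by omega) 3 (by omega) ![0, 1, 2] m012 (by funext k; fin_cases k <;> rfl),
        dd 4 (by omega) 1 (by omega) ![0, 2, 3] m023 (by funext k; fin_cases k <;> rfl),
        dd 4 (by omega) 2 (by omega) ![0, 1, 3] m013 (by funext k; fin_cases k <;> rfl),
        dd 4 (by omega) 0 (by omega) ![1, 2, 3] m123 (by funext k; fin_cases k <;> rfl),
        ht012, ht023] at h
    exact h
  have hB : α (y, z) = (X.map (![0, 2, 4] : Fin 3 → Fin 5) m024 w,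
      X.map (![2, 3, 4] : Fin 3 → Fin 5) m234 w) := by
    have h := hα (d X (n := 3) 1 (by omega) w)
    rw [dd 1 (by omega) 3 (by omega) ![0, 2, 3] m023 (by funext k; fin_cases k <;> rfl),
        dd 1 (by omega) 1 (by omega) ![0, 3, 4] m034 (by funext k; fin_cases k <;> rfl),
        dd 1 (by omega) 2 (by omega) ![0, 2, 4] m024 (by funext k; fin_cases k <;> rfl),
        dd 1 (by omega) 0 (by omega) ![2, 3, 4] m234 (by funext k; fin_cases k <;> rfl),
        ht023, ht034] at h
    exact h
  have hC : α (x, X.map (![0, 2, 4] : Fin 3 → Fin 5) m024 w) =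
      (X.map (![0, 1, 4] : Fin 3 → Fin 5) m014 w,
       X.map (![1, 2, 4] : Fin 3 → Fin 5) m124 w) := by
    have h := hα (d X (n := 3) 3 (by omega) w)
    rw [dd 3 (by omega) 3 (by omega) ![0, 1, 2] m012 (by funext k; fin_cases k <;> rfl),
        dd 3 (by omega) 1 (by omega) ![0, 2, 4] m024 (by funext k; fin_cases k <;> rfl),
        dd 3 (by omega) 2 (by omega) ![0, 1, 4] m014 (by funext k; fin_cases k <;> rfl),
        dd 3 (by omega) 0 (by omega) ![1, 2, 4] m124 (by funext k; fin_cases k <;> rfl),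
        ht012] at h
    exact h
  have hD : α (X.map (![0, 1, 3] : Fin 3 → Fin 5) m013 w, z) =
      (X.map (![0, 1, 4] : Fin 3 → Fin 5) m014 w,
       X.map (![1, 3, 4] : Fin 3 → Fin 5) m134 w) := by
    have h := hα (d X (n := 3) 2 (by omega) w)
    rw [dd 2 (by omega) 3 (by omega) ![0, 1, 3] m013 (by funext k; fin_cases k <;> rfl),
        dd 2 (by omega) 1 (by omega) ![0, 3, 4] m034 (by funext k; fin_cases k <;> rfl),
        dd 2 (by omega) 2 (by omega) ![0, 1, 4] m014 (by funext k; fin_cases k <;> rfl),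
        dd 2 (by omega) 0 (by omega) ![1, 3, 4] m134 (by funext k; fin_cases k <;> rfl),
        ht034] at h
    exact h
  have hE : α (X.map (![1, 2, 3] : Fin 3 → Fin 5) m123 w,
      X.map (![1, 3, 4] : Fin 3 → Fin 5) m134 w) =
      (X.map (![1, 2, 4] : Fin 3 → Fin 5) m124 w,
       X.map (![2, 3, 4] : Fin 3 → Fin 5) m234 w) := by
    have h := hα (d X (n := 3) 0 (by omega) w)
    rw [dd 0 (by omega) 3 (by omega) ![1, 2, 3] m123 (by funext k; fin_cases k <;> rfl),
        dd 0 (by omega) 1 (by omega) ![1, 3, 4] m134 (by funext k; fin_cases k <;> rfl),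
        dd 0 (by omega) 2 (by omega) ![1, 2, 4] m124 (by funext k; fin_cases k <;> rfl),
        dd 0 (by omega) 0 (by omega) ![2, 3, 4] m234 (by funext k; fin_cases k <;> rfl)] at h
    exact h
  simp only [Function.comp_apply, a12, a13, a23, hA, hB, hC, hD, hE]

end SemiSeg
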